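/- Let ECC: F_q^d → F_q^v be an error-correcting code with relative distance at least 1−γ. Let Y, Y' be random variables over F_q^d (arbitrarily correlated) with prefixes Y₁ = Prefix(Y, d₁), Y'₁ = Prefix(Y', d₁), and suppose that whenever Y₁ = Y'₁ a common index I = I' is used, while I is ε-close in statistical distance (jointly with (Y,Y')) to uniform on {1,…,v} and independent of (Y, Y'). Define G = Y₁ ∘ ECC(Y)_I and G' = Y'₁ ∘ ECC(Y')_{I'}. If Pr[Y ≠ Y'] = 1, then Pr[G = G'] ≤ γ + √2·ε. -/

import Mathlib

open Matrix Kronecker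
open scoped Classical ComplexOrder

noncomputable section

abbrev Str (k : ℕ) := Fin k → Bool

def IsDensity {A : Type*} [Fintype A] (ρ : Matrix A A ℂ) : Prop :=
  ρ.PosSemidef ∧ ρ.trace = 1

def IsPure {A : Type*} (ρ : Matrix A A ℂ) : Prop :=
  ∃ v : A → ℂ, ρ = Matrix.vecMulVec v (star v)

/-- The square root of a positive semidefinite matrix, as `Matrix.PosSemidef.sqrt` was defined
in Mathlib (December 2024); that declaration has since been removed. -/
def psdSqrt {A : Type*} [Fintype A] [DecidableEq A] {M : Matrix A A ℂ} (hM : M.PosSemidef) :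
    Matrix A A ℂ :=
  (hM.1.eigenvectorUnitary : Matrix A A ℂ) *
    diagonal (fun i => ((Real.sqrt (hM.1.eigenvalues i) : ℝ) : ℂ)) *
    (star hM.1.eigenvectorUnitary : Matrix A A ℂ)

def traceNorm {A : Type*} [Fintype A] [DecidableEq A] (M : Matrix A A ℂ) : ℝ :=
  (psdSqrt (Matrix.posSemidef_conjTranspose_mul_self M)).trace.re

def msqrt {A : Type*} [Fintype A] [DecidableEq A] (M : Matrix A A ℂ) : Matrix A A ℂ :=
  if h : M.PosSemidef then psdSqrt h else 0

def fidelity {A : Type*} [Fintype A] [DecidableEq A] (ρ σ : Matrix A A ℂ) : ℝ :=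
  traceNorm (msqrt ρ * msqrt σ)

def Bures {A : Type*} [Fintype A] [DecidableEq A] (ρ σ : Matrix A A ℂ) : ℝ :=
  Real.sqrt (1 - fidelity ρ σ)

def mUniform (A : Type*) [Fintype A] [DecidableEq A] : Matrix A A ℂ :=
  ((Fintype.card A : ℂ))⁻¹ • (1 : Matrix A A ℂ)

def dmaxLE {A : Type*} [Fintype A] (ρ σ : Matrix A A ℂ) (c : ℝ) : Prop :=
  (((2:ℝ) ^ c) • σ - ρ).PosSemidef

def Dmax {A : Type*} [Fintype A] (ρ σ : Matrix A A ℂ) : ℝ :=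
  sInf {c : ℝ | dmaxLE ρ σ c}

def ptraceRight {A B : Type*} [Fintype A] [Fintype B]
    (ρ : Matrix (A × B) (A × B) ℂ) : Matrix A A ℂ :=
  Matrix.of fun a a' => ∑ b, ρ (a, b) (a', b)

def ptraceLeft {A B : Type*} [Fintype A] [Fintype B]
    (ρ : Matrix (A × B) (A × B) ℂ) : Matrix B B ℂ :=
  Matrix.of fun b b' => ∑ a, ρ (a, b) (a, b')

def condHmin {A B : Type*} [Fintype A] [Fintype B] [DecidableEq A] [DecidableEq B]
    (ρ : Matrix (A × B) (A × B) ℂ) : ℝ :=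
  sSup {x : ℝ | ∃ σ : Matrix B B ℂ, IsDensity σ ∧ x = - Dmax ρ ((1 : Matrix A A ℂ) ⊗ₖ σ)}

def condHminTilde {A B : Type*} [Fintype A] [Fintype B] [DecidableEq A] [DecidableEq B]
    (ρ : Matrix (A × B) (A × B) ℂ) : ℝ :=
  - Dmax ρ ((1 : Matrix A A ℂ) ⊗ₖ ptraceLeft ρ)

/-!
Where the prefixes agree the indices coincide, so `G = G'` forces `ECC(Y)` and `ECC(Y')` to agree
at the common index `I`. Replacing the law of `(I, Y, Y')` by `U_{[v]} ⊗ (Y, Y')` changes the mass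
of this event by at most the statistical distance `ε`, and under the product law the distinct
codewords `ECC(Y) ≠ ECC(Y')` agree at a uniform index with probability at most `γ`.
-/

open Finset

theorem Finset.sum_comm₃ {ι α β M : Type*} [AddCommMonoid M] (s : Finset ι) (t : Finset α)
    (u : Finset β) (f : ι → α → β → M) :
    ∑ i ∈ s, ∑ a ∈ t, ∑ b ∈ u, f i a b = ∑ a ∈ t, ∑ b ∈ u, ∑ i ∈ s, f i a b := by
  rw [sum_comm]
  exact sum_congr rfl fun a _ => sum_comm

theorem sum_ite_le_sum_ite_add_half_sum_abs_sub {κ : Type*} [Fintype κ] (P : κ → Prop)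
    [DecidablePred P] {f g : κ → ℝ} (hfg : ∑ x, f x = ∑ x, g x) :
    ∑ x, (if P x then f x else 0) ≤
      ∑ x, (if P x then g x else 0) + 1 / 2 * ∑ x, |f x - g x| := by
  have hzero : ∑ x with P x, (f x - g x) + ∑ x with ¬P x, (f x - g x) = 0 := by
    rw [sum_filter_add_sum_filter_not, sum_sub_distrib, hfg, sub_self]
  have habs : ∑ x with P x, |f x - g x| + ∑ x with ¬P x, |f x - g x| = ∑ x, |f x - g x| :=
    sum_filter_add_sum_filter_not _ _ _
  have hin : ∑ x with P x, (f x - g x) ≤ ∑ x with P x, |f x - g x| :=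
    sum_le_sum fun x _ => le_abs_self _
  have hout : -∑ x with ¬P x, (f x - g x) ≤ ∑ x with ¬P x, |f x - g x| := by
    rw [← sum_neg_distrib]
    exact sum_le_sum fun x _ => neg_le_abs _
  simp only [← sum_filter, sum_sub_distrib, neg_sub] at hzero hin hout ⊢
  linarith

section Collision

variable {ι α : Type*} [Fintype ι] [Fintype α]

theorem sum_ite_code_agree_le [Nonempty ι] {σ : Type*} [DecidableEq σ] (C : α → ι → σ) {γ : ℝ}
    (hdist : ∀ x y, x ≠ y → (#{i | C x i = C y i} : ℝ) ≤ γ * Fintype.card ι)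
    {R : α → α → ℝ} (hR : ∀ y y', 0 ≤ R y y') (hdiag : ∀ y, R y y = 0) :
    ∑ i, ∑ y, ∑ y', (if C y i = C y' i then (Fintype.card ι : ℝ)⁻¹ * R y y' else 0) ≤
      γ * ∑ y, ∑ y', R y y' := by
  have hcard : (Fintype.card ι : ℝ) ≠ 0 := Nat.cast_ne_zero.2 Fintype.card_ne_zero
  rw [sum_comm₃]
  simp only [mul_sum]
  refine sum_le_sum fun y _ => sum_le_sum fun y' _ => ?_
  rcases eq_or_ne y y' with rfl | hne
  · simp [hdiag]
  rw [← sum_filter, sum_const, nsmul_eq_mul]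
  calc (#{i | C y i = C y' i} : ℝ) * ((Fintype.card ι : ℝ)⁻¹ * R y y')
      ≤ γ * Fintype.card ι * ((Fintype.card ι : ℝ)⁻¹ * R y y') :=
        mul_le_mul_of_nonneg_right (hdist y y' hne) (mul_nonneg (by positivity) (hR y y'))
    _ = γ * R y y' := by field_simp

theorem sum_collision_le_sum_common_index {β σ : Type*} [DecidableEq β] [DecidableEq σ]
    (pre : α → β) (C : α → ι → σ) {p : ι → ι → α → α → ℝ}
    (hpos : ∀ i i' y y', 0 ≤ p i i' y y')
    (hcommon : ∀ i i' y y', pre y = pre y' → i ≠ i' → p i i' y y' = 0) :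
    ∑ i, ∑ i', ∑ y, ∑ y', (if pre y = pre y' ∧ C y i = C y' i' then p i i' y y' else 0) ≤
      ∑ i, ∑ y, ∑ y', if C y i = C y' i then ∑ i', p i i' y y' else 0 := by
  refine sum_le_sum fun i _ => ?_
  rw [sum_comm₃]
  refine sum_le_sum fun y _ => sum_le_sum fun y' _ => ?_
  by_cases hpre : pre y = pre y'
  · rw [sum_eq_single i (fun i' _ hi' => by simp [hcommon i i' y y' hpre hi'.symm])
      (by simp)]
    simp only [hpre, true_and]
    split_ifs
    · exact single_le_sum (fun i' _ => hpos i i' y y') (mem_univ i)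
    · rfl
  · simp only [hpre, false_and, if_false, sum_const_zero]
    split_ifs
    · exact sum_nonneg fun i' _ => hpos i i' y y'
    · rfl

theorem sum_collision_le_add_statDist [Nonempty ι] {β σ : Type*} [DecidableEq β] [DecidableEq σ]
    (pre : α → β) (C : α → ι → σ) {γ ε : ℝ}
    (hdist : ∀ x y, x ≠ y → (#{i | C x i = C y i} : ℝ) ≤ γ * Fintype.card ι)
    (p : ι → ι → α → α → ℝ) (hpos : ∀ i i' y y', 0 ≤ p i i' y y')
    (hsum : ∑ i, ∑ i', ∑ y, ∑ y', p i i' y y' = 1)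
    (hdiag : ∀ i i' y, p i i' y y = 0)
    (hcommon : ∀ i i' y y', pre y = pre y' → i ≠ i' → p i i' y y' = 0)
    (hstat : 1 / 2 * ∑ i, ∑ y, ∑ y',
        |∑ i', p i i' y y' - (Fintype.card ι : ℝ)⁻¹ * ∑ i₂, ∑ i', p i₂ i' y y'| ≤ ε) :
    ∑ i, ∑ i', ∑ y, ∑ y', (if pre y = pre y' ∧ C y i = C y' i' then p i i' y y' else 0) ≤
      γ + ε := by
  set Q : ι → α → α → ℝ := fun i y y' => ∑ i', p i i' y y'
  set R : α → α → ℝ := fun y y' => ∑ i, Q i y y'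
  have hQ : ∑ i, ∑ y, ∑ y', Q i y y' = 1 := by
    rw [← hsum]
    exact sum_congr rfl fun i _ => (sum_comm₃ _ _ _ _).symm
  have hR : ∑ y, ∑ y', R y y' = 1 := (sum_comm₃ _ _ _ Q).symm.trans hQ
  have hunif : ∑ _i : ι, ∑ y, ∑ y', (Fintype.card ι : ℝ)⁻¹ * R y y' = 1 := by
    simp only [← mul_sum, hR, sum_const, card_univ, nsmul_eq_mul, mul_one]
    exact mul_inv_cancel₀ (Nat.cast_ne_zero.2 Fintype.card_ne_zero)
  have hdev := sum_ite_le_sum_ite_add_half_sum_abs_sub (κ := ι × α × α)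
    (fun x => C x.2.1 x.1 = C x.2.2 x.1) (f := fun x => Q x.1 x.2.1 x.2.2)
    (g := fun x => (Fintype.card ι : ℝ)⁻¹ * R x.2.1 x.2.2)
    (by simp only [Fintype.sum_prod_type, hQ, hunif])
  simp only [Fintype.sum_prod_type] at hdev
  have hcode := sum_ite_code_agree_le C hdist (R := R)
    (fun y y' => sum_nonneg fun i _ => sum_nonneg fun i' _ => hpos i i' y y')
    (fun y => sum_eq_zero fun i _ => sum_eq_zero fun i' _ => hdiag i i' y)
  calc _ ≤ ∑ i, ∑ y, ∑ y', if C y i = C y' i then Q i y y' else 0 :=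
        sum_collision_le_sum_common_index pre C hpos hcommon
    _ ≤ γ * ∑ y, ∑ y', R y y' + ε := by linarith
    _ = γ + ε := by rw [hR, mul_one]

end Collision

theorem advice_collision_general (q d v d₁ : ℕ) (hv : 0 < v) (h1 : d₁ ≤ d)
    (γ ε : ℝ) (hε : 0 ≤ ε)
    (ECC : (Fin d → Fin q) → Fin v → Fin q)
    (hdist : ∀ x y, x ≠ y →
      ((Finset.univ.filter (fun i => ECC x i = ECC y i)).card : ℝ) ≤ γ * v)
    (p : Fin v → Fin v → (Fin d → Fin q) → (Fin d → Fin q) → ℝ)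
    (hpos : ∀ i i' y y', 0 ≤ p i i' y y')
    (hsum : ∑ i, ∑ i', ∑ y, ∑ y', p i i' y y' = 1)
    (hneq : ∀ i i' y y', y = y' → p i i' y y' = 0)
    (hcommon : ∀ i i' y y',
      (fun j : Fin d₁ => y (Fin.castLE h1 j)) = (fun j : Fin d₁ => y' (Fin.castLE h1 j)) →
      i ≠ i' → p i i' y y' = 0)
    (hstat : (1/2) * (∑ i, ∑ y, ∑ y',
        |(∑ i', p i i' y y') - ((v:ℝ))⁻¹ * (∑ i₂, ∑ i', p i₂ i' y y')|) ≤ ε) :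
    (∑ i, ∑ i', ∑ y, ∑ y',
        if ((fun j : Fin d₁ => y (Fin.castLE h1 j)) = (fun j : Fin d₁ => y' (Fin.castLE h1 j))
            ∧ ECC y i = ECC y' i')
        then p i i' y y' else 0) ≤ γ + Real.sqrt 2 * ε := by
  have : Nonempty (Fin v) := ⟨⟨0, hv⟩⟩
  calc _ ≤ γ + ε :=
        sum_collision_le_add_statDist (fun y j => y (Fin.castLE h1 j)) ECC
          (by rwa [Fintype.card_fin]) p hpos hsum (fun i i' y => hneq i i' y y rfl) hcommon
          (by rwa [Fintype.card_fin])
    _ ≤ γ + Real.sqrt 2 * ε := by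
        gcongr
        exact le_mul_of_one_le_left hε Real.one_lt_sqrt_two.le

/-- **advice generator collision bound.** Let `ECC` have relative distance
`≥ 1 − γ`.  Let `(I, I', Y, Y')` be jointly distributed with `Pr[Y ≠ Y'] = 1`, with
`I = I'` whenever the prefixes `Y₁, Y'₁` agree, and with `(I, Y, Y')` `ε`-close in
statistical distance to `U_{[v]} ⊗ (Y,Y')`.  Then the advices
`G = Y₁ ∘ ECC(Y)_I` and `G' = Y'₁ ∘ ECC(Y')_{I'}` collide with probability
at most `γ + √2·ε`. -/
theorem advice_collision (q d v d₁ : ℕ) (hv : 0 < v) (h1 : d₁ ≤ d)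
    (γ ε : ℝ) (hγ : 0 ≤ γ) (hε : 0 ≤ ε)
    (ECC : (Fin d → Fin q) → Fin v → Fin q)
    (hdist : ∀ x y, x ≠ y →
      ((Finset.univ.filter (fun i => ECC x i = ECC y i)).card : ℝ) ≤ γ * v)
    (p : Fin v → Fin v → (Fin d → Fin q) → (Fin d → Fin q) → ℝ)
    (hpos : ∀ i i' y y', 0 ≤ p i i' y y')
    (hsum : ∑ i, ∑ i', ∑ y, ∑ y', p i i' y y' = 1)
    (hneq : ∀ i i' y y', y = y' → p i i' y y' = 0)
    (hcommon : ∀ i i' y y',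
      (fun j : Fin d₁ => y (Fin.castLE h1 j)) = (fun j : Fin d₁ => y' (Fin.castLE h1 j)) →
      i ≠ i' → p i i' y y' = 0)
    (hstat : (1/2) * (∑ i, ∑ y, ∑ y',
        |(∑ i', p i i' y y') - ((v:ℝ))⁻¹ * (∑ i₂, ∑ i', p i₂ i' y y')|) ≤ ε) :
    (∑ i, ∑ i', ∑ y, ∑ y',
        if ((fun j : Fin d₁ => y (Fin.castLE h1 j)) = (fun j : Fin d₁ => y' (Fin.castLE h1 j))
            ∧ ECC y i = ECC y' i')
        then p i i' y y' else 0) ≤ γ + Real.sqrt 2 * ε :=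
  advice_collision_general q d v d₁ hv h1 γ ε hε ECC hdist p hpos hsum hneq hcommon hstat
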